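/- Let J ⊆ K[x_1,...,x_n] be a squarefree monomial ideal all of whose minimal monomial generators have degree 3, and let m^[3] be the ideal generated by all squarefree monomials of degree 3. Then the following are equivalent: (a) J ∩ (m^[3])^t = J·(m^[3])^{t-1} for all t ≥ 1; (b) for every minimal generator x_{i_1} x_{i_2} x_{i_3} of J and every 2-element subset G ⊆ [n], at least one of the squarefree monomials x_{G ∪ {i_1}}, x_{G ∪ {i_2}}, x_{G ∪ {i_3}} belongs to J. -/

import Mathlib

/-- The squarefree `d`-th power `m^[d]` of `m = (x_1,…,x_n)`: the ideal of `K[x_1,…,x_n]`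
generated by all squarefree monomials of degree `d`. -/
noncomputable def sqfreePower (K : Type) [Field K] (n d : ℕ) : Ideal (MvPolynomial (Fin n) K) :=
  Ideal.span {p | ∃ F : Finset (Fin n), F.card = d ∧ p = ∏ i ∈ F, MvPolynomial.X i}

/-!
All ideals involved are monomial ideals, so (a) can be tested on monomials `x^d`. Writing
`A = {i | d i > t}`, removing a `k`-set `T ⊆ supp d` from `d` changes the truncated degree by
`∑ min (d i) (t + 1) = ∑ min ((d - 1_T) i) t + k + |A \ T|`. Choosing `T` greedily (inside `A`
if `|A| ≥ k`, containing `A` otherwise) gives the criterion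
`x^d ∈ (m^[k])^t ↔ k t ≤ ∑ i, min (d i) t`.

(b) ⇒ (a): to divide `x^d ∈ J ∩ (m^[k])^(t+1)` by a generator `x_F` of `J` with quotient in
`(m^[k])^t`, any `F` works when `|A| ≥ k`; when `|A| < k`, condition (b) applied to a `(k-1)`-set
`S` with `A ⊆ S ⊆ A ∪ F` yields a generator containing `A`, which works.
(a) ⇒ (b): for `S ⊄ F`, testing (a) on `d = 1_{F \ S} + c 1_S` with `c = |F \ S| ≥ 2` (so that
`A = S` and the truncated degree is exactly `k c`) forces a generator containing `S`, i.e. some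
`x_{S ∪ {r}} ∈ J`.
-/

open MvPolynomial Finset Pointwise

namespace Finset

variable {σ : Type*}

noncomputable def charVec (F : Finset σ) : σ →₀ ℕ := ∑ i ∈ F, Finsupp.single i 1

theorem prod_X_eq_monomial_charVec (R : Type*) [CommSemiring R] (F : Finset σ) :
    ∏ i ∈ F, (X i : MvPolynomial σ R) = monomial F.charVec 1 := by
  rw [charVec, monomial_sum_one]
  rfl

variable [DecidableEq σ]

theorem charVec_apply (F : Finset σ) (i : σ) : F.charVec i = if i ∈ F then 1 else 0 := by
  simp [charVec, Finsupp.finsetSum_apply, Finsupp.single_apply]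

theorem support_charVec (F : Finset σ) : F.charVec.support = F := by
  ext i
  simp [charVec_apply]

theorem charVec_le_iff_subset_support {F : Finset σ} {d : σ →₀ ℕ} :
    F.charVec ≤ d ↔ F ⊆ d.support := by
  simp only [Finsupp.le_def, charVec_apply, subset_iff, Finsupp.mem_support_iff]
  refine ⟨fun h i hi => ?_, fun h i => ?_⟩
  · have := h i
    rw [if_pos hi] at this
    omega
  · split_ifs with hi
    · exact Nat.one_le_iff_ne_zero.2 (h hi)
    · exact Nat.zero_le _

theorem charVec_le_charVec_iff {F E : Finset σ} : F.charVec ≤ E.charVec ↔ F ⊆ E := by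
  rw [charVec_le_iff_subset_support, support_charVec]

end Finset

namespace MvPolynomial

variable {σ R : Type*} [CommSemiring R]

variable (R) in
noncomputable def monomialIdeal (A : Set (σ →₀ ℕ)) : Ideal (MvPolynomial σ R) :=
  Ideal.span ((fun d => monomial d 1) '' A)

theorem monomialIdeal_mul (A B : Set (σ →₀ ℕ)) :
    monomialIdeal R A * monomialIdeal R B = monomialIdeal R (A + B) := by
  rw [monomialIdeal, monomialIdeal, monomialIdeal, Ideal.span_mul_span']
  congr 1
  ext p
  simp only [Set.mem_mul, Set.mem_image, Set.mem_add]
  constructor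
  · rintro ⟨_, ⟨a, ha, rfl⟩, _, ⟨b, hb, rfl⟩, rfl⟩
    exact ⟨a + b, ⟨a, ha, b, hb, rfl⟩, by rw [monomial_mul, one_mul]⟩
  · rintro ⟨_, ⟨a, ha, b, hb, rfl⟩, rfl⟩
    exact ⟨_, ⟨a, ha, rfl⟩, _, ⟨b, hb, rfl⟩, by rw [monomial_mul, one_mul]⟩

/-- Here `t • A` is the `t`-fold pointwise sum `A + ⋯ + A`, not `{t • a | a ∈ A}`. -/
theorem monomialIdeal_pow (A : Set (σ →₀ ℕ)) (t : ℕ) :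
    monomialIdeal R A ^ t = monomialIdeal R (t • A) := by
  induction t with
  | zero =>
    rw [pow_zero, zero_smul, Ideal.one_eq_top, eq_comm, Ideal.eq_top_iff_one]
    exact Ideal.subset_span ⟨0, rfl, by simp [monomial_zero']⟩
  | succ t ih => rw [pow_succ, ih, monomialIdeal_mul, succ_nsmul]

theorem span_prod_X_eq_monomialIdeal (𝒢 : Set (Finset σ)) :
    Ideal.span {p | ∃ F ∈ 𝒢, p = ∏ i ∈ F, (X i : MvPolynomial σ R)} =
      monomialIdeal R (charVec '' 𝒢) := by
  simp_rw [monomialIdeal, Set.image_image, ← prod_X_eq_monomial_charVec, Set.image, eq_comm]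

variable [Nontrivial R]

theorem monomial_mem_monomialIdeal {A : Set (σ →₀ ℕ)} {e : σ →₀ ℕ} :
    monomial e (1 : R) ∈ monomialIdeal R A ↔ ∃ a ∈ A, a ≤ e := by
  classical
  rw [monomialIdeal, mem_ideal_span_monomial_image, support_monomial, if_neg one_ne_zero]
  simp

theorem mem_monomialIdeal_iff {A : Set (σ →₀ ℕ)} {p : MvPolynomial σ R} :
    p ∈ monomialIdeal R A ↔ ∀ e ∈ p.support, monomial e (1 : R) ∈ monomialIdeal R A := by
  simp_rw [monomial_mem_monomialIdeal]
  exact mem_ideal_span_monomial_image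

theorem monomialIdeal_inf_le {A B C : Set (σ →₀ ℕ)}
    (h : ∀ e, monomial e (1 : R) ∈ monomialIdeal R A → monomial e (1 : R) ∈ monomialIdeal R B →
      monomial e (1 : R) ∈ monomialIdeal R C) :
    monomialIdeal R A ⊓ monomialIdeal R B ≤ monomialIdeal R C := fun _ hp =>
  mem_monomialIdeal_iff.2 fun e he =>
    h e (mem_monomialIdeal_iff.1 hp.1 e he) (mem_monomialIdeal_iff.1 hp.2 e he)

theorem monomial_mem_monomialIdeal_mul_iff {A B : Set (σ →₀ ℕ)} {e : σ →₀ ℕ} :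
    monomial e (1 : R) ∈ monomialIdeal R A * monomialIdeal R B ↔
      ∃ a ∈ A, a ≤ e ∧ monomial (e - a) (1 : R) ∈ monomialIdeal R B := by
  simp only [monomialIdeal_mul, monomial_mem_monomialIdeal, Set.mem_add]
  constructor
  · rintro ⟨_, ⟨a, ha, b, hb, rfl⟩, hle⟩
    exact ⟨a, ha, le_trans le_self_add hle, b, hb, le_tsub_of_add_le_left hle⟩
  · rintro ⟨a, ha, hae, b, hb, hbe⟩
    exact ⟨a + b, ⟨a, ha, b, hb, rfl⟩, add_le_of_le_tsub_left_of_le hae hbe⟩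

end MvPolynomial

namespace Finsupp

variable {σ : Type*} [Fintype σ]

def truncDegree (t : ℕ) (d : σ →₀ ℕ) : ℕ := ∑ i, min (d i) t

def superlevel (t : ℕ) (d : σ →₀ ℕ) : Finset σ := {i | t ≤ d i}

@[simp]
theorem mem_superlevel {t : ℕ} {d : σ →₀ ℕ} {i : σ} : i ∈ d.superlevel t ↔ t ≤ d i := by
  simp [superlevel]

theorem truncDegree_le_mul_card_support (t : ℕ) (d : σ →₀ ℕ) :
    d.truncDegree t ≤ t * #d.support := calc
  d.truncDegree t = ∑ i ∈ d.support, min (d i) t :=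
    (Finset.sum_subset (subset_univ _) fun i _ hi => by simp [notMem_support_iff.1 hi]).symm
  _ ≤ ∑ _ ∈ d.support, t := Finset.sum_le_sum fun _ _ => min_le_right _ _
  _ = t * #d.support := by rw [Finset.sum_const, smul_eq_mul, mul_comm]

theorem superlevel_succ_subset_support (t : ℕ) (d : σ →₀ ℕ) : d.superlevel (t + 1) ⊆ d.support :=
  fun i hi => mem_support_iff.2 (by rw [mem_superlevel] at hi; omega)

variable [DecidableEq σ]

theorem mul_card_add_card_sdiff_le_truncDegree {T : Finset σ} {d : σ →₀ ℕ} (hT : T ⊆ d.support)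
    (t : ℕ) : t * #(d.superlevel t) + #(T \ d.superlevel t) ≤ d.truncDegree t := by
  have hcoord : ∀ i, t * (if i ∈ d.superlevel t then 1 else 0) +
      (if i ∈ T \ d.superlevel t then 1 else 0) ≤ min (d i) t := by
    intro i
    have hTi := charVec_le_iff_subset_support.2 hT i
    simp only [charVec_apply, mem_sdiff, mem_superlevel, min_def] at hTi ⊢
    grind
  have := Finset.sum_le_sum fun i (_ : i ∈ univ) => hcoord i
  rw [truncDegree]
  simpa only [Finset.sum_add_distrib, ← Finset.mul_sum, Finset.sum_boole,
    Finset.filter_mem_eq_inter, univ_inter, Nat.cast_id] using this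

theorem truncDegree_succ_eq {T : Finset σ} {d : σ →₀ ℕ} (hT : T ⊆ d.support) (t : ℕ) :
    d.truncDegree (t + 1) =
      (d - T.charVec).truncDegree t + #T + #(d.superlevel (t + 1) \ T) := by
  have hcoord : ∀ i, min (d i) (t + 1) = min ((d - T.charVec) i) t + (if i ∈ T then 1 else 0)
      + (if i ∈ d.superlevel (t + 1) \ T then 1 else 0) := by
    intro i
    have hTi := charVec_le_iff_subset_support.2 hT i
    simp only [tsub_apply, charVec_apply, mem_sdiff, mem_superlevel, min_def] at hTi ⊢
    grind
  simp only [truncDegree, hcoord, Finset.sum_add_distrib, Finset.sum_boole,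
    Finset.filter_mem_eq_inter, univ_inter, Nat.cast_id]

theorem le_truncDegree_sub_charVec_of_card_le {T : Finset σ} {d : σ →₀ ℕ} {t : ℕ}
    (hT : T ⊆ d.support) (hcard : #T ≤ #(d.superlevel (t + 1))) :
    #T * t ≤ (d - T.charVec).truncDegree t := by
  have hsucc := truncDegree_succ_eq hT t
  have hlow := mul_card_add_card_sdiff_le_truncDegree hT (t + 1)
  have hT' := card_sdiff_add_card_inter T (d.superlevel (t + 1))
  have hA := card_sdiff_add_card_inter (d.superlevel (t + 1)) T
  rw [inter_comm] at hA
  nlinarith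

theorem le_truncDegree_sub_charVec_of_superlevel_subset {T : Finset σ} {d : σ →₀ ℕ} {t : ℕ}
    (hT : T ⊆ d.support) (hsub : d.superlevel (t + 1) ⊆ T)
    (h : #T * (t + 1) ≤ d.truncDegree (t + 1)) :
    #T * t ≤ (d - T.charVec).truncDegree t := by
  rw [truncDegree_succ_eq hT, sdiff_eq_empty_iff_subset.2 hsub, card_empty] at h
  linarith

theorem exists_card_eq_le_truncDegree_sub_charVec {k t : ℕ} {d : σ →₀ ℕ}
    (h : k * (t + 1) ≤ d.truncDegree (t + 1)) :
    ∃ T : Finset σ, #T = k ∧ T ⊆ d.support ∧ k * t ≤ (d - T.charVec).truncDegree t := by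
  have hA := superlevel_succ_subset_support t d
  by_cases hk : k ≤ #(d.superlevel (t + 1))
  · obtain ⟨T, hTA, rfl⟩ := exists_subset_card_eq hk
    exact ⟨T, rfl, hTA.trans hA, le_truncDegree_sub_charVec_of_card_le (hTA.trans hA) hk⟩
  · have hsupp : k ≤ #d.support := le_of_mul_le_mul_right
      (by linarith [truncDegree_le_mul_card_support (t + 1) d]) t.succ_pos
    obtain ⟨T, hAT, hTd, rfl⟩ := exists_subsuperset_card_eq hA (not_le.1 hk).le hsupp
    exact ⟨T, rfl, hTd, le_truncDegree_sub_charVec_of_superlevel_subset hTd hAT h⟩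

theorem exists_mem_nsmul_charVec_le_iff (k t : ℕ) (d : σ →₀ ℕ) :
    (∃ a ∈ t • (charVec '' {T : Finset σ | #T = k}), a ≤ d) ↔ k * t ≤ d.truncDegree t := by
  induction t generalizing d with
  | zero => simp
  | succ t ih =>
    simp only [succ_nsmul, Set.mem_add, Set.mem_image, Set.mem_ofPred_eq]
    constructor
    · rintro ⟨_, ⟨b, hb, _, ⟨T, rfl, rfl⟩, rfl⟩, hle⟩
      have hTd : T ⊆ d.support := charVec_le_iff_subset_support.1 (le_trans le_add_self hle)
      have := (ih (d - T.charVec)).1 ⟨b, hb, le_tsub_of_add_le_right hle⟩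
      rw [truncDegree_succ_eq hTd]
      linarith
    · intro h
      obtain ⟨T, rfl, hTd, hrest⟩ := exists_card_eq_le_truncDegree_sub_charVec h
      obtain ⟨b, hb, hbd⟩ := (ih (d - T.charVec)).2 hrest
      exact ⟨b + T.charVec, ⟨b, hb, T.charVec, ⟨T, rfl, rfl⟩, rfl⟩,
        add_le_of_le_tsub_right_of_le (charVec_le_iff_subset_support.2 hTd) hbd⟩

end Finsupp

section Exchange

variable {σ : Type*} [DecidableEq σ]

theorem support_charVec_add_nsmul_charVec {U : Finset σ} (hU : U.Nonempty) (S : Finset σ) :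
    (U.charVec + #U • S.charVec).support = U ∪ S := by
  have := card_pos.2 hU
  ext i
  simp only [Finsupp.mem_support_iff, Finsupp.add_apply, Finsupp.smul_apply, smul_eq_mul,
    charVec_apply, mem_union]
  grind

variable [Fintype σ]

theorem superlevel_charVec_add_nsmul_charVec {U S : Finset σ} (hUS : Disjoint U S)
    (hU : 2 ≤ #U) : (U.charVec + #U • S.charVec).superlevel #U = S := by
  ext i
  have : i ∈ U → i ∉ S := fun hi => disjoint_left.1 hUS hi
  simp only [Finsupp.mem_superlevel, Finsupp.add_apply, Finsupp.smul_apply, smul_eq_mul,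
    charVec_apply]
  grind

theorem truncDegree_charVec_add_nsmul_charVec {U S : Finset σ} (hUS : Disjoint U S) :
    (U.charVec + #U • S.charVec).truncDegree #U = #U * (#S + 1) := by
  have hcoord : ∀ i, min ((U.charVec + #U • S.charVec) i) #U =
      (if i ∈ U then 1 else 0) + #U * (if i ∈ S then 1 else 0) := by
    intro i
    have : i ∈ U → i ∉ S := fun hi => disjoint_left.1 hUS hi
    have : i ∈ U → 0 < #U := fun hi => card_pos.2 ⟨i, hi⟩
    simp only [Finsupp.add_apply, Finsupp.smul_apply, smul_eq_mul, charVec_apply]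
    grind
  simp only [Finsupp.truncDegree, hcoord, Finset.sum_add_distrib, ← Finset.mul_sum,
    Finset.sum_boole, Finset.filter_mem_eq_inter, univ_inter, Nat.cast_id]
  ring

variable (k : ℕ) (G : Set (Finset σ))

/-- Condition (b) for generators of size `k`; `#S + 1 = k` avoids the truncated `k - 1`. -/
def ExchangeProperty : Prop :=
  ∀ F ∈ G, ∀ S : Finset σ, #S + 1 = k → ∃ r ∈ F, insert r S ∈ G

/-- Exponent-vector form of `J ∩ (m^[k])^(t+1) ⊆ J * (m^[k])^t`: a generator can be peeled off
every exponent of `J ∩ (m^[k])^(t+1)`, leaving an exponent of `(m^[k])^t`. -/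
def PeelingProperty : Prop :=
  ∀ (t : ℕ) (d : σ →₀ ℕ), (∃ F ∈ G, F ⊆ d.support) → k * (t + 1) ≤ d.truncDegree (t + 1) →
    ∃ F' ∈ G, F' ⊆ d.support ∧ k * t ≤ (d - F'.charVec).truncDegree t

variable {k G}

theorem ExchangeProperty.peelingProperty (hG : ∀ F ∈ G, #F = k) (h : ExchangeProperty k G) :
    PeelingProperty k G := by
  rintro t d ⟨F, hF, hFd⟩ hd
  by_cases hk : k ≤ #(d.superlevel (t + 1))
  · refine ⟨F, hF, hFd, ?_⟩
    rw [← hG F hF] at hk ⊢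
    exact Finsupp.le_truncDegree_sub_charVec_of_card_le hFd hk
  · set A := d.superlevel (t + 1)
    have hA : A ⊆ d.support := Finsupp.superlevel_succ_subset_support t d
    have hAF : k ≤ #(A ∪ F) := hG F hF ▸ card_le_card subset_union_right
    obtain ⟨S, hAS, hSAF, hS⟩ :=
      exists_subsuperset_card_eq (subset_union_left : A ⊆ A ∪ F) (n := k - 1) (by omega)
        (by omega)
    obtain ⟨r, hrF, hrS⟩ := h F hF S (by omega)
    have hsub : insert r S ⊆ d.support :=
      insert_subset (hFd hrF) (hSAF.trans (union_subset hA hFd))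
    refine ⟨insert r S, hrS, hsub, ?_⟩
    rw [← hG _ hrS] at hd ⊢
    exact Finsupp.le_truncDegree_sub_charVec_of_superlevel_subset hsub
      (hAS.trans (subset_insert _ _)) hd

theorem PeelingProperty.exchangeProperty (hG : ∀ F ∈ G, #F = k) (h : PeelingProperty k G) :
    ExchangeProperty k G := by
  intro F hF S hS
  suffices ∃ F' ∈ G, S ⊆ F' ∧ F' ⊆ F ∪ S by
    obtain ⟨F', hF', hSF', hF'FS⟩ := this
    obtain ⟨r, hrS, rfl⟩ := exists_eq_insert_iff.2 ⟨hSF', by rw [hG F' hF', hS]⟩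
    exact ⟨r, (mem_union.1 (hF'FS (mem_insert_self r S))).resolve_right hrS, hF'⟩
  by_cases hSF : S ⊆ F
  · exact ⟨F, hF, hSF, subset_union_left⟩
  have hU : 2 ≤ #(F \ S) := by
    have := card_lt_card ⟨inter_subset_right, fun h => hSF (h.trans inter_subset_left)⟩
    have := card_sdiff_add_card_inter F S
    rw [hG F hF] at this
    omega
  have hsupp := support_charVec_add_nsmul_charVec (card_pos.1 (by omega : 0 < #(F \ S))) S
  have hlevel := superlevel_charVec_add_nsmul_charVec sdiff_disjoint hU
  have htrunc := truncDegree_charVec_add_nsmul_charVec (sdiff_disjoint : Disjoint (F \ S) S)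
  obtain ⟨c, hc⟩ : ∃ c, #(F \ S) = c + 1 := ⟨#(F \ S) - 1, by omega⟩
  rw [sdiff_union_self_eq_union] at hsupp
  rw [hc] at hsupp hlevel htrunc
  set e := (F \ S).charVec + (c + 1) • S.charVec
  obtain ⟨F', hF', hF'e, hpeel⟩ :=
    h c e ⟨F, hF, hsupp ▸ subset_union_left⟩ (by rw [htrunc, hS, mul_comm])
  have hsucc := Finsupp.truncDegree_succ_eq hF'e c
  rw [hlevel, htrunc, hG F' hF', hS] at hsucc
  have : #(S \ F') = 0 := by nlinarith
  exact ⟨F', hF', sdiff_eq_empty_iff_subset.1 (card_eq_zero.1 this), hsupp ▸ hF'e⟩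

theorem peelingProperty_iff_exchangeProperty (hG : ∀ F ∈ G, #F = k) :
    PeelingProperty k G ↔ ExchangeProperty k G :=
  ⟨PeelingProperty.exchangeProperty hG, ExchangeProperty.peelingProperty hG⟩

end Exchange

namespace MvPolynomial

variable {σ R : Type*} [DecidableEq σ] [CommSemiring R] [Nontrivial R]

theorem monomial_charVec_mem_monomialIdeal_iff {k : ℕ} {G : Set (Finset σ)}
    (hG : ∀ F ∈ G, #F = k) {E : Finset σ} (hE : #E ≤ k) :
    monomial E.charVec (1 : R) ∈ monomialIdeal R (charVec '' G) ↔ E ∈ G := by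
  rw [monomial_mem_monomialIdeal]
  refine ⟨?_, fun hE => ⟨_, ⟨E, hE, rfl⟩, le_rfl⟩⟩
  rintro ⟨_, ⟨F, hF, rfl⟩, hFE⟩
  rwa [← eq_of_subset_of_card_le (charVec_le_charVec_iff.1 hFE) (hG F hF ▸ hE)]

variable [Fintype σ]

theorem monomial_mem_monomialIdeal_pow_iff {k t : ℕ} {d : σ →₀ ℕ} :
    monomial d (1 : R) ∈ monomialIdeal R (charVec '' {T : Finset σ | #T = k}) ^ t ↔
      k * t ≤ d.truncDegree t := by
  rw [monomialIdeal_pow, monomial_mem_monomialIdeal, Finsupp.exists_mem_nsmul_charVec_le_iff]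

theorem monomialIdeal_inf_pow_eq_mul_pow_iff {k : ℕ} {G : Set (Finset σ)}
    (hG : ∀ F ∈ G, #F = k) :
    (∀ t, 1 ≤ t →
      monomialIdeal R (charVec '' G) ⊓ monomialIdeal R (charVec '' {T : Finset σ | #T = k}) ^ t =
        monomialIdeal R (charVec '' G) *
          monomialIdeal R (charVec '' {T : Finset σ | #T = k}) ^ (t - 1)) ↔
      PeelingProperty k G := by
  set 𝒮 := charVec '' {T : Finset σ | #T = k}
  have hJ (d : σ →₀ ℕ) :
      monomial d (1 : R) ∈ monomialIdeal R (charVec '' G) ↔ ∃ F ∈ G, F ⊆ d.support := by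
    simp [monomial_mem_monomialIdeal, charVec_le_iff_subset_support]
  have hJP (t : ℕ) (d : σ →₀ ℕ) :
      monomial d (1 : R) ∈ monomialIdeal R (charVec '' G) * monomialIdeal R 𝒮 ^ t ↔
        ∃ F ∈ G, F ⊆ d.support ∧ k * t ≤ (d - F.charVec).truncDegree t := by
    simp [𝒮, monomialIdeal_pow, monomial_mem_monomialIdeal_mul_iff, monomial_mem_monomialIdeal,
      charVec_le_iff_subset_support, Finsupp.exists_mem_nsmul_charVec_le_iff]
  constructor
  · intro h t d hd hdeg
    have hmem :
        monomial d (1 : R) ∈ monomialIdeal R (charVec '' G) ⊓ monomialIdeal R 𝒮 ^ (t + 1) :=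
      ⟨(hJ d).2 hd, monomial_mem_monomialIdeal_pow_iff.2 hdeg⟩
    rw [h (t + 1) le_add_self, add_tsub_cancel_right] at hmem
    exact (hJP t d).1 hmem
  · intro h t ht
    obtain ⟨s, rfl⟩ := Nat.exists_eq_add_of_le' ht
    rw [add_tsub_cancel_right]
    refine le_antisymm ?_ (le_inf Ideal.mul_le_left ?_)
    · have hP : monomialIdeal R 𝒮 ^ (s + 1) = monomialIdeal R ((s + 1) • 𝒮) :=
        monomialIdeal_pow _ _
      have hJPs : monomialIdeal R (charVec '' G) * monomialIdeal R 𝒮 ^ s =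
          monomialIdeal R (charVec '' G + s • 𝒮) := by
        rw [monomialIdeal_pow, monomialIdeal_mul]
      rw [hP, hJPs]
      refine monomialIdeal_inf_le fun e he hPe => ?_
      rw [← hP, monomial_mem_monomialIdeal_pow_iff] at hPe
      rw [← hJPs, hJP]
      exact h s e ((hJ e).1 he) hPe
    · have hJle : monomialIdeal R (charVec '' G) ≤ monomialIdeal R 𝒮 :=
        Ideal.span_mono (Set.image_mono (Set.image_mono fun F hF => hG F hF))
      calc monomialIdeal R (charVec '' G) * monomialIdeal R 𝒮 ^ s
          ≤ monomialIdeal R 𝒮 * monomialIdeal R 𝒮 ^ s := Ideal.mul_mono_left hJle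
        _ = monomialIdeal R 𝒮 ^ (s + 1) := (pow_succ' _ _).symm

end MvPolynomial

theorem sqfreePower_eq_monomialIdeal (K : Type) [Field K] (n k : ℕ) :
    sqfreePower K n k = monomialIdeal K (charVec '' {T : Finset (Fin n) | #T = k}) :=
  span_prod_X_eq_monomialIdeal _

/-- Let `J` be a squarefree monomial ideal of `K[x_1,…,x_n]` all of
whose minimal generators have degree `3` (so `J` is spanned by the squarefree monomials
`x_F`, `F ∈ G`, with all `|F| = 3`).  The following are equivalent:
(a) `J ∩ (m^[3])^t = J·(m^[3])^{t-1}` for all `t ≥ 1` (vanishing of `VV_{J ⊆ m^[3]}`);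
(b) for every minimal generator `x_F` (`F ∈ G`) and every `2`-subset `S ⊆ [n]`, some
`r ∈ F` satisfies `x_{S ∪ {r}} ∈ J`. -/
theorem sqfree_deg3_VV_vanishes_iff {K : Type} [Field K] {n : ℕ}
    (G : Set (Finset (Fin n))) (hG : ∀ F ∈ G, F.card = 3)
    (J : Ideal (MvPolynomial (Fin n) K))
    (hJ : J = Ideal.span {p | ∃ F ∈ G, p = ∏ i ∈ F, MvPolynomial.X i}) :
    (∀ t : ℕ, 1 ≤ t →
        J ⊓ (sqfreePower K n 3) ^ t = J * (sqfreePower K n 3) ^ (t - 1)) ↔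
      (∀ F ∈ G, ∀ S : Finset (Fin n), S.card = 2 →
        ∃ r ∈ F, (∏ i ∈ insert r S, MvPolynomial.X i) ∈ J) := by
  rw [hJ, span_prod_X_eq_monomialIdeal, sqfreePower_eq_monomialIdeal,
    monomialIdeal_inf_pow_eq_mul_pow_iff hG, peelingProperty_iff_exchangeProperty hG]
  refine forall₂_congr fun F _ => forall_congr' fun S => ?_
  rw [show #S + 1 = 3 ↔ #S = 2 by omega]
  refine imp_congr_right fun hS => exists_congr fun r => and_congr_right fun _ => ?_
  rw [prod_X_eq_monomial_charVec, monomial_charVec_mem_monomialIdeal_iff hG]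
  exact (card_insert_le r S).trans (by omega)
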